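/- Let L₊ := span{Û^N(b₀,b₀) : N ∈ ℤ} and L₋ := span{Û^N(b₀,−b₀) : N ∈ ℤ}. Then Û(L₊) = L₊, Û(L₋) = L₋, the vectors (b_N, 0) and (0, b_N) belong to L₊ + L₋ for every N ∈ ℤ, and L₊ + L₋ is dense in H × H. -/

import Mathlib

/-!
Û sends the generator Û^N(b₀, ±b₀) of L_± to Û^(N+1)(b₀, ±b₀), so it permutes the spanning set
of L_±. Since U is a weighted shift, (U*)⁻¹ is a weighted shift too (with weights 1 / conj u_n), so
U^N b₀ and (U*)^(-N) b₀ are nonzero multiples of b_N. Half the sum and half the difference of the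
N-th generators of L₊ and L₋ are therefore nonzero multiples of (b_N, 0) and (0, b_N), and these
span a dense subspace of H × H because (b_n) is a Hilbert basis.
-/

noncomputable section

abbrev Hsp : Type := lp (fun _ : ℤ => ℂ) 2

/-- `e n` is the standard orthonormal basis vector `b_n` (indicator sequence of `n`). -/
noncomputable def e (n : ℤ) : Hsp := lp.single 2 n 1

open Submodule Set

theorem ContinuousLinearEquiv.zpow_apply_of_apply_eq_succ {R M : Type*} [Semiring R]
    [AddCommMonoid M] [Module R M] [TopologicalSpace M]
    (V : M ≃L[R] M) {f : ℤ → M} (hf : ∀ n, V (f n) = f (n + 1)) (m N : ℤ) :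
    (V ^ N) (f m) = f (m + N) := by
  induction N using Int.induction_on with
  | zero => rw [add_zero]; rfl
  | succ k ih =>
    rw [← mul_self_zpow]
    change V ((V ^ (k : ℤ)) (f m)) = _
    rw [ih, hf, add_assoc]
  | pred k ih =>
    apply V.injective
    change (V * V ^ (-(k : ℤ) - 1)) (f m) = _
    rw [mul_self_zpow, sub_add_cancel, ih, hf, sub_eq_add_neg, add_assoc, neg_add_cancel_right]

theorem Submodule.map_span_range_of_apply_eq_succ {R M : Type*} [Semiring R]
    [AddCommMonoid M] [Module R M] (T : M →ₗ[R] M) {v : ℤ → M}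
    (hv : ∀ n, T (v n) = v (n + 1)) :
    (span R (range v)).map T = span R (range v) := by
  rw [map_span, ← range_comp, show T ∘ v = v ∘ (Equiv.addRight 1) from funext hv,
    (Equiv.addRight (1 : ℤ)).surjective.range_comp]

section Doubling

variable {𝕜 M ι : Type*} [DivisionRing 𝕜] [CharZero 𝕜] [AddCommGroup M] [Module 𝕜 M]
  (x y : ι → M)

theorem mk_zero_mem_span_sup_span (i : ι) :
    (x i, 0) ∈ span 𝕜 (range fun n => (x n, y n)) ⊔ span 𝕜 (range fun n => (x n, -y n)) := by
  have h : (x i, (0 : M)) = (2 : 𝕜)⁻¹ • ((x i, y i) + (x i, -y i)) := by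
    rw [Prod.mk_add_mk, add_neg_cancel, ← two_smul 𝕜, Prod.smul_mk, inv_smul_smul₀ two_ne_zero,
      smul_zero]
  rw [h]
  exact smul_mem _ _ (add_mem_sup (subset_span ⟨i, rfl⟩) (subset_span ⟨i, rfl⟩))

theorem zero_mk_mem_span_sup_span (i : ι) :
    (0, y i) ∈ span 𝕜 (range fun n => (x n, y n)) ⊔ span 𝕜 (range fun n => (x n, -y n)) := by
  have h : ((0 : M), y i) = (2 : 𝕜)⁻¹ • ((x i, y i) + -(x i, -y i)) := by
    rw [Prod.neg_mk, neg_neg, Prod.mk_add_mk, add_neg_cancel, ← two_smul 𝕜, Prod.smul_mk,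
      inv_smul_smul₀ two_ne_zero, smul_zero]
  rw [h]
  exact smul_mem _ _ (add_mem_sup (subset_span ⟨i, rfl⟩) (neg_mem (subset_span ⟨i, rfl⟩)))

end Doubling

theorem Submodule.dense_of_mk_zero_mem_of_zero_mk_mem {R E F ι κ : Type*} [Semiring R]
    [AddCommMonoid E] [Module R E] [TopologicalSpace E]
    [AddCommMonoid F] [Module R F] [TopologicalSpace F]
    {x : ι → E} {y : κ → F} (hx : Dense (span R (range x) : Set E))
    (hy : Dense (span R (range y) : Set F)) {S : Submodule R (E × F)}
    (hxS : ∀ i, (x i, 0) ∈ S) (hyS : ∀ j, (0, y j) ∈ S) : Dense (S : Set (E × F)) := by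
  have hxS' : span R (range x) ≤ S.comap (LinearMap.inl R E F) :=
    span_le.2 (range_subset_iff.2 hxS)
  have hyS' : span R (range y) ≤ S.comap (LinearMap.inr R E F) :=
    span_le.2 (range_subset_iff.2 hyS)
  refine (hx.prod hy).mono ?_
  rintro ⟨a, b⟩ ⟨ha, hb⟩
  rw [← add_zero a, ← zero_add b, ← Prod.mk_add_mk]
  exact S.add_mem (hxS' ha) (hyS' hb)

theorem inner_e_left (m : ℤ) (f : Hsp) : inner ℂ (e m) f = f m := by
  simp [e, lp.inner_single_left]

theorem e_apply (n m : ℤ) : e n m = if m = n then 1 else 0 := by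
  simp [e, lp.single_apply, Pi.single_apply]

theorem dense_span_range_e : Dense (span ℂ (range e) : Set Hsp) := by
  have hb : ⇑(default : HilbertBasis ℤ ℂ Hsp) = e := by
    funext n
    rw [← HilbertBasis.repr_symm_single]
    rfl
  rw [← hb, Submodule.dense_iff_topologicalClosure_eq_top]
  exact HilbertBasis.dense_span _

theorem adjoint_apply_e_succ {T : Hsp →L[ℂ] Hsp} {c : ℤ → ℂ}
    (hT : ∀ n, T (e n) = c n • e (n + 1)) (n : ℤ) :
    T.adjoint (e (n + 1)) = star (c n) • e n := by
  ext m
  rw [← inner_e_left, ContinuousLinearMap.adjoint_inner_right, hT, inner_smul_left,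
    inner_e_left, lp.coeFn_smul, Pi.smul_apply, e_apply, e_apply, smul_eq_mul]
  by_cases h : m = n <;> simp [h]

section WeightedShift

variable {u : ℤ → ℂ} {U : Hsp ≃L[ℂ] Hsp}

theorem zpow_apply_e_of_weightedShift (hu : ∀ n, u n ≠ 0)
    (hU : ∀ n, U (e n) = (u (n + 1) / u n) • e (n + 1)) (m N : ℤ) :
    (U ^ N) (e m) = (u (m + N) / u m) • e (m + N) := by
  have hf : ∀ n, U (u n • e n) = u (n + 1) • e (n + 1) := fun n => by
    rw [map_smul, hU, smul_smul, mul_div_cancel₀ _ (hu n)]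
  calc (U ^ N) (e m) = (U ^ N) ((u m)⁻¹ • u m • e m) := by rw [inv_smul_smul₀ (hu m)]
    _ = (u m)⁻¹ • u (m + N) • e (m + N) := by rw [map_smul, U.zpow_apply_of_apply_eq_succ hf]
    _ = (u (m + N) / u m) • e (m + N) := by rw [smul_smul, inv_mul_eq_div]

theorem zpow_neg_apply_e_of_adjoint_weightedShift {Ustar : Hsp ≃L[ℂ] Hsp} (hu : ∀ n, u n ≠ 0)
    (hU : ∀ n, U (e n) = (u (n + 1) / u n) • e (n + 1))
    (hUstar : (Ustar : Hsp →L[ℂ] Hsp) = (U : Hsp →L[ℂ] Hsp).adjoint) (m N : ℤ) :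
    (Ustar ^ (-N)) (e m) = (star (u m) / star (u (m + N))) • e (m + N) := by
  have hu' : ∀ n, star (u n) ≠ 0 := fun n => star_ne_zero.2 (hu n)
  have hf : ∀ n, Ustar⁻¹ ((star (u n))⁻¹ • e n) = (star (u (n + 1)))⁻¹ • e (n + 1) := fun n => by
    refine Ustar.symm_apply_eq.2 ?_
    change _ = (Ustar : Hsp →L[ℂ] Hsp) _
    rw [map_smul, hUstar, adjoint_apply_e_succ hU, smul_smul, star_div₀, div_eq_mul_inv,
      inv_mul_cancel_left₀ (hu' _)]
  calc (Ustar ^ (-N)) (e m) = (Ustar⁻¹ ^ N) (star (u m) • (star (u m))⁻¹ • e m) := by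
        rw [smul_inv_smul₀ (hu' m), inv_zpow']
    _ = star (u m) • (star (u (m + N)))⁻¹ • e (m + N) := by
        rw [map_smul, Ustar⁻¹.zpow_apply_of_apply_eq_succ hf]
    _ = (star (u m) / star (u (m + N))) • e (m + N) := by rw [smul_smul, div_eq_mul_inv]

end WeightedShift

theorem stmt16_general (u : ℤ → ℂ) (hu : ∀ n : ℤ, u n ≠ 0)
    (U Ustar : Hsp ≃L[ℂ] Hsp)
    (hU : ∀ n : ℤ, U (e n) = (u (n + 1) / u n) • e (n + 1))
    (hUstar : (Ustar : Hsp →L[ℂ] Hsp) = ContinuousLinearMap.adjoint (U : Hsp →L[ℂ] Hsp))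
    (Uhat : (Hsp × Hsp) →L[ℂ] (Hsp × Hsp))
    (hUhat : ∀ x y : Hsp, Uhat (x, y) = (U x, Ustar⁻¹ y))
    (Lp Lm : Submodule ℂ (Hsp × Hsp))
    (hLp : Lp = Submodule.span ℂ
      (Set.range fun N : ℤ => (((U ^ N) (e 0), (Ustar ^ (-N)) (e 0)) : Hsp × Hsp)))
    (hLm : Lm = Submodule.span ℂ
      (Set.range fun N : ℤ => (((U ^ N) (e 0), -(Ustar ^ (-N)) (e 0)) : Hsp × Hsp))) :
    Submodule.map (Uhat : (Hsp × Hsp) →ₗ[ℂ] (Hsp × Hsp)) Lp = Lp ∧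
    Submodule.map (Uhat : (Hsp × Hsp) →ₗ[ℂ] (Hsp × Hsp)) Lm = Lm ∧
    (∀ N : ℤ, ((e N, (0 : Hsp)) : Hsp × Hsp) ∈ Lp ⊔ Lm) ∧
    (∀ N : ℤ, (((0 : Hsp), e N) : Hsp × Hsp) ∈ Lp ⊔ Lm) ∧
    Dense ((Lp ⊔ Lm : Submodule ℂ (Hsp × Hsp)) : Set (Hsp × Hsp)) := by
  have hUstep : ∀ (N : ℤ) x, U ((U ^ N) x) = (U ^ (N + 1)) x := fun N x => by
    rw [← mul_self_zpow]; rfl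
  have hUstar_step : ∀ (N : ℤ) y, Ustar⁻¹ ((Ustar ^ (-N)) y) = (Ustar ^ (-(N + 1))) y :=
    fun N y => by rw [neg_add', sub_eq_neg_add, zpow_add, zpow_neg_one]; rfl
  have hUe : ∀ N, (U ^ N) (e 0) = (u N / u 0) • e N := fun N => by
    simpa using zpow_apply_e_of_weightedShift hu hU 0 N
  have hUstar_e : ∀ N, (Ustar ^ (-N)) (e 0) = (star (u 0) / star (u N)) • e N := fun N => by
    simpa using zpow_neg_apply_e_of_adjoint_weightedShift hu hU hUstar 0 N
  have hfst : ∀ N, (e N, (0 : Hsp)) ∈ Lp ⊔ Lm := fun N => by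
    have h := mk_zero_mem_span_sup_span (𝕜 := ℂ) (fun N => (U ^ N) (e 0))
      (fun N => (Ustar ^ (-N)) (e 0)) N
    rwa [← hLp, ← hLm, hUe, ← Prod.smul_mk_zero,
      smul_mem_iff _ (div_ne_zero (hu N) (hu 0))] at h
  have hsnd : ∀ N, ((0 : Hsp), e N) ∈ Lp ⊔ Lm := fun N => by
    have h := zero_mk_mem_span_sup_span (𝕜 := ℂ) (fun N => (U ^ N) (e 0))
      (fun N => (Ustar ^ (-N)) (e 0)) N
    rwa [← hLp, ← hLm, hUstar_e, ← Prod.smul_zero_mk,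
      smul_mem_iff _ (div_ne_zero (star_ne_zero.2 (hu 0)) (star_ne_zero.2 (hu N)))] at h
  refine ⟨?_, ?_, hfst, hsnd,
    dense_of_mk_zero_mem_of_zero_mk_mem dense_span_range_e dense_span_range_e hfst hsnd⟩
  · rw [hLp]
    exact map_span_range_of_apply_eq_succ _ fun N => by
      rw [ContinuousLinearMap.coe_coe, hUhat, hUstep, hUstar_step]
  · rw [hLm]
    exact map_span_range_of_apply_eq_succ _ fun N => by
      rw [ContinuousLinearMap.coe_coe, hUhat, map_neg, hUstep, hUstar_step]

/-- With `L₊ := span{Û^N(b₀,b₀) : N ∈ ℤ}` and `L₋ := span{Û^N(b₀,−b₀) : N ∈ ℤ}`,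
where `Û(x,y) = (Ux, (U*)⁻¹y)` and `Û^N(b₀,±b₀) = (U^N b₀, ±(U*)^{-N} b₀)`:
`Û(L₊) = L₊`, `Û(L₋) = L₋`, the vectors `(b_N, 0)` and `(0, b_N)` belong to
`L₊ + L₋` for all `N ∈ ℤ`, and `L₊ + L₋` is dense in `H × H`. -/
theorem stmt16 (u : ℤ → ℂ) (hu : ∀ n : ℤ, u n ≠ 0)
    (hbdd : BddAbove (Set.range fun n : ℤ => ‖u (n + 1) / u n‖))
    (hinf : ∃ δ : ℝ, 0 < δ ∧ ∀ n : ℤ, δ ≤ ‖u (n + 1) / u n‖)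
    (U Ustar : Hsp ≃L[ℂ] Hsp)
    (hU : ∀ n : ℤ, U (e n) = (u (n + 1) / u n) • e (n + 1))
    (hUstar : (Ustar : Hsp →L[ℂ] Hsp) = ContinuousLinearMap.adjoint (U : Hsp →L[ℂ] Hsp))
    (Uhat : (Hsp × Hsp) →L[ℂ] (Hsp × Hsp))
    (hUhat : ∀ x y : Hsp, Uhat (x, y) = (U x, Ustar⁻¹ y))
    (Lp Lm : Submodule ℂ (Hsp × Hsp))
    (hLp : Lp = Submodule.span ℂ
      (Set.range fun N : ℤ => (((U ^ N) (e 0), (Ustar ^ (-N)) (e 0)) : Hsp × Hsp)))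
    (hLm : Lm = Submodule.span ℂ
      (Set.range fun N : ℤ => (((U ^ N) (e 0), -(Ustar ^ (-N)) (e 0)) : Hsp × Hsp))) :
    Submodule.map (Uhat : (Hsp × Hsp) →ₗ[ℂ] (Hsp × Hsp)) Lp = Lp ∧
    Submodule.map (Uhat : (Hsp × Hsp) →ₗ[ℂ] (Hsp × Hsp)) Lm = Lm ∧
    (∀ N : ℤ, ((e N, (0 : Hsp)) : Hsp × Hsp) ∈ Lp ⊔ Lm) ∧
    (∀ N : ℤ, (((0 : Hsp), e N) : Hsp × Hsp) ∈ Lp ⊔ Lm) ∧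
    Dense ((Lp ⊔ Lm : Submodule ℂ (Hsp × Hsp)) : Set (Hsp × Hsp)) :=
  stmt16_general u hu U Ustar hU hUstar Uhat hUhat Lp Lm hLp hLm
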